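/- Let k be a field, n ≥ 1, and let f ∈ k[x₀,…,x_n] be homogeneous of degree d with d ≠ 0 in k. Write fᵢ = ∂f/∂xᵢ and g_♭ for the dehomogenization of g at x₀ = 1. Then for every point p = (a₁,…,a_n) ∈ kⁿ with maximal ideal m_p = (x₁−a₁,…,x_n−a_n) ⊆ k[x₁,…,x_n], the length of the localization at m_p of k[x₁,…,x_n]/((f₀)_♭,…,(f_n)_♭) equals the length of the localization at m_p of k[x₁,…,x_n]/(f_♭, ∂f_♭/∂x₁,…, ∂f_♭/∂x_n). (That is, τ(Z,z) = τ_f(Z,z) for every point z of the chart x₀ ≠ 0, where Z is the scheme defined by the jacobian ideal of f.) -/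

import Mathlib

open MvPolynomial

set_option synthInstance.maxHeartbeats 1000000
set_option maxHeartbeats 1000000

/-- The length of a module: the Krull dimension of its lattice of submodules
(for a module of finite length this is the common length of all composition
series, by Jordan–Hölder). -/
noncomputable def moduleLength (R M : Type*) [Semiring R] [AddCommMonoid M]
    [Module R M] : WithBot ℕ∞ :=
  Order.krullDim (Submodule R M)

/-- Dehomogenization at `x₀ = 1`: the `k`-algebra map
`k[x₀,…,xₙ] → k[x₁,…,xₙ]` sending `x₀ ↦ 1` and `xᵢ ↦ xᵢ` for `1 ≤ i ≤ n`. -/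
noncomputable def dehom (k : Type*) [CommSemiring k] (n : ℕ) :
    MvPolynomial (Fin (n + 1)) k →ₐ[k] MvPolynomial (Fin n) k :=
  aeval (Fin.cases (1 : MvPolynomial (Fin n) k) X)

/-! The jacobian ideal of `f`, dehomogenized, equals the Tjurina ideal of `f♭` as soon as
`deg f` is invertible: for `j ≥ 1` dehomogenization commutes with `∂/∂xⱼ`, and the Euler
identity `∑ xᵢ fᵢ = d f` becomes `(f₀)♭ + ∑ⱼ xⱼ ∂f♭/∂xⱼ = d f♭`, which lets one trade
`(f₀)♭` for `f♭` modulo the partials of `f♭`. Equal ideals give equal local rings. -/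

lemma Ideal.span_insert_eq_span_insert_of_sub_mem {R : Type*} [CommRing R] {s : Set R}
    {a b : R} (u : Rˣ) (h : a - u * b ∈ Ideal.span s) :
    Ideal.span (insert a s) = Ideal.span (insert b s) := by
  have hs : ∀ c, Ideal.span s ≤ Ideal.span (insert c s) := fun _ =>
    Ideal.span_mono (Set.subset_insert _ _)
  apply le_antisymm <;> rw [Ideal.span_le, Set.insert_subset_iff] <;>
    refine ⟨?_, Ideal.subset_span.trans (Ideal.span_mono (Set.subset_insert _ _))⟩
  · rw [← sub_add_cancel a (u * b)]
    exact add_mem (hs b h) (Ideal.mul_mem_left _ _ (Ideal.subset_span (Set.mem_insert _ _)))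
  · have hb : b = u⁻¹ * (a - (a - u * b)) := by simp
    rw [hb]
    exact Ideal.mul_mem_left _ _
      (sub_mem (Ideal.subset_span (Set.mem_insert _ _)) (hs a h))

section Dehomogenization

variable {k : Type*} [CommSemiring k] {n : ℕ}

@[simp]
lemma dehom_X_zero : dehom k n (X 0) = 1 := by
  simp [dehom]

@[simp]
lemma dehom_X_succ (j : Fin n) : dehom k n (X j.succ) = X j := by
  simp [dehom]

lemma pderiv_dehom (j : Fin n) (g : MvPolynomial (Fin (n + 1)) k) :
    pderiv j (dehom k n g) = dehom k n (pderiv j.succ g) := by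
  classical
  induction g using MvPolynomial.induction_on with
  | C a => simp [dehom]
  | add p q hp hq => simp [hp, hq]
  | mul_X p i hp =>
    simp only [map_mul, Derivation.leibniz, smul_eq_mul, map_add, hp, pderiv_X]
    congr 1
    induction i using Fin.cases with
    | zero => simp [(Fin.succ_ne_zero j).symm]
    | succ m => simp [Pi.single_apply, Fin.succ_inj]

lemma MvPolynomial.IsHomogeneous.dehom_pderiv_zero_add_sum {d : ℕ}
    {f : MvPolynomial (Fin (n + 1)) k} (hf : f.IsHomogeneous d) :
    dehom k n (pderiv 0 f) + ∑ j : Fin n, X j * pderiv j (dehom k n f) = d • dehom k n f := by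
  have euler := congrArg (dehom k n) hf.sum_X_mul_pderiv
  rw [map_sum, map_nsmul, Fin.sum_univ_succ] at euler
  simpa [pderiv_dehom] using euler

end Dehomogenization

lemma span_dehom_pderiv_eq_span_insert_dehom {k : Type*} [CommRing k] {n d : ℕ}
    (hd : IsUnit (d : k)) {f : MvPolynomial (Fin (n + 1)) k} (hf : f.IsHomogeneous d) :
    Ideal.span (Set.range fun i : Fin (n + 1) => dehom k n (pderiv i f))
      = Ideal.span (insert (dehom k n f) (Set.range fun i : Fin n => pderiv i (dehom k n f))) := by
  rw [Fin.range_fin_succ]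
  simp only [Fin.tail_def, ← pderiv_dehom]
  refine Ideal.span_insert_eq_span_insert_of_sub_mem (hd.map C).unit ?_
  have hsum : ∑ j : Fin n, X j * pderiv j (dehom k n f)
      ∈ Ideal.span (Set.range fun j : Fin n => pderiv j (dehom k n f)) :=
    Ideal.sum_mem _ fun j _ => Ideal.mul_mem_left _ _ (Ideal.subset_span ⟨j, rfl⟩)
  convert neg_mem hsum using 1
  rw [IsUnit.unit_spec, ← smul_eq_C_mul, Nat.cast_smul_eq_nsmul,
    ← hf.dehom_pderiv_zero_add_sum]
  ring

theorem stmt9_general (k : Type*) [Field k] (n : ℕ) (d : ℕ)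
    (hd : (d : k) ≠ 0)
    (f : MvPolynomial (Fin (n + 1)) k) (hf : f.IsHomogeneous d)
    (mp : Ideal (MvPolynomial (Fin n) k))
    (hmax : mp.IsMaximal)
    (J₁ J₂ : Ideal (MvPolynomial (Fin n) k))
    (hJ₁ : J₁ = Ideal.span
      (Set.range fun i : Fin (n + 1) => dehom k n (pderiv i f)))
    (hJ₂ : J₂ = Ideal.span
      (insert (dehom k n f)
        (Set.range fun i : Fin n => pderiv i (dehom k n f)))) :
    moduleLength
        (Localization
          (Submonoid.map (Ideal.Quotient.mk J₁) (@Ideal.primeCompl _ _ mp hmax.isPrime)))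
        (Localization
          (Submonoid.map (Ideal.Quotient.mk J₁) (@Ideal.primeCompl _ _ mp hmax.isPrime)))
      = moduleLength
        (Localization
          (Submonoid.map (Ideal.Quotient.mk J₂) (@Ideal.primeCompl _ _ mp hmax.isPrime)))
        (Localization
          (Submonoid.map (Ideal.Quotient.mk J₂) (@Ideal.primeCompl _ _ mp hmax.isPrime))) := by
  obtain rfl : J₁ = J₂ := by
    rw [hJ₁, hJ₂, span_dehom_pderiv_eq_span_insert_dehom hd.isUnit hf]
  rfl

/-- **τ(Z,z) = τ_f(Z,z)**: for `f` homogeneous of degree `d` with `d ≠ 0` in `k` and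
every point `p ∈ kⁿ` with maximal ideal `m_p = (x₁-a₁,…,xₙ-aₙ)`, the localization at
`m_p` of `k[x₁,…,xₙ]/((f₀)♭,…,(fₙ)♭)` and the localization at `m_p` of
`k[x₁,…,xₙ]/(f♭, ∂f♭/∂x₁,…,∂f♭/∂xₙ)` have the same length as modules over
themselves. -/
theorem stmt9 (k : Type*) [Field k] (n : ℕ) (hn : 1 ≤ n) (d : ℕ)
    (hd : (d : k) ≠ 0)
    (f : MvPolynomial (Fin (n + 1)) k) (hf : f.IsHomogeneous d)
    (p : Fin n → k)
    (mp : Ideal (MvPolynomial (Fin n) k))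
    (hmp : mp = Ideal.span (Set.range fun i : Fin n => X i - C (p i)))
    (hmax : mp.IsMaximal)
    (J₁ J₂ : Ideal (MvPolynomial (Fin n) k))
    (hJ₁ : J₁ = Ideal.span
      (Set.range fun i : Fin (n + 1) => dehom k n (pderiv i f)))
    (hJ₂ : J₂ = Ideal.span
      (insert (dehom k n f)
        (Set.range fun i : Fin n => pderiv i (dehom k n f)))) :
    moduleLength
        (Localization
          (Submonoid.map (Ideal.Quotient.mk J₁) (@Ideal.primeCompl _ _ mp hmax.isPrime)))
        (Localization
          (Submonoid.map (Ideal.Quotient.mk J₁) (@Ideal.primeCompl _ _ mp hmax.isPrime)))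
      = moduleLength
        (Localization
          (Submonoid.map (Ideal.Quotient.mk J₂) (@Ideal.primeCompl _ _ mp hmax.isPrime)))
        (Localization
          (Submonoid.map (Ideal.Quotient.mk J₂) (@Ideal.primeCompl _ _ mp hmax.isPrime))) :=
  stmt9_general k n d hd f hf mp hmax J₁ J₂ hJ₁ hJ₂
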